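/- Let d ≥ 2, 0 < β < α < 2 with α = 2β. Let B = B(0,1) and define h(y) := ∫_{w ∈ B} |w−y|^{β−d} min(1, δ_B(w)^β/|y−w|^β) · max(1, log(|w−y|/δ_B(y))) dw for y ∈ B, where δ_B(z) = 1 − |z|. Then there exists c = c(d, β) > 0 such that h(y) ≤ c (δ_B(y)^{−β/2} + 1) for all y ∈ B. -/

import Mathlib

/-!
Since `‖w - y‖ ≤ 2`, the logarithmic factor is at most `max 1 (log (2 / δ))` with
`δ = 1 - ‖y‖`, and `log (1 / δ) ≤ (2 / β) δ ^ (-β / 2)`. Bounding the minimum by `1`, the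
integral is at most that factor times `∫_{B(0,2)} ‖u‖ ^ (β - d) du`, which is finite because
`β - d > -d`.
-/

open MeasureTheory Metric Set Real

section BallTranslate

variable {E : Type*} [SeminormedAddCommGroup E]

lemma preimage_sub_right_ball_neg (y : E) (r : ℝ) : (· - y) ⁻¹' ball (-y) r = ball 0 r := by
  ext w; simp [dist_eq_norm]

lemma ball_neg_subset_ball {y : E} {r R : ℝ} (hy : ‖y‖ ≤ R) : ball (-y) r ⊆ ball 0 (r + R) :=
  ball_subset_ball' (by simpa using hy)

end BallTranslate

section NormRpow

variable {E : Type*} [NormedAddCommGroup E] [NormedSpace ℝ E] [FiniteDimensional ℝ E]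
  [MeasurableSpace E] [BorelSpace E] {μ : Measure E} [μ.IsAddHaarMeasure] {s : ℝ}

lemma integrableOn_ball_norm_rpow (hE : 1 ≤ Module.finrank ℝ E)
    (hs : -(Module.finrank ℝ E : ℝ) < s) (r : ℝ) :
    IntegrableOn (fun x : E ↦ ‖x‖ ^ s) (ball 0 r) μ :=
  integrableOn_ball_of_norm_le_rpow (C := 1) (α := -s) hE (by linarith)
    (ae_of_all _ fun x ↦ by simp [abs_of_nonneg (rpow_nonneg (norm_nonneg x) s)])
    (measurable_norm.pow_const s).aestronglyMeasurable

lemma integrableOn_ball_norm_sub_rpow (hE : 1 ≤ Module.finrank ℝ E)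
    (hs : -(Module.finrank ℝ E : ℝ) < s) (y : E) (r : ℝ) :
    IntegrableOn (fun w ↦ ‖w - y‖ ^ s) (ball 0 r) μ := by
  rw [← preimage_sub_right_ball_neg y r]
  refine ((measurePreserving_sub_right μ y).integrableOn_comp_preimage
    (Homeomorph.subRight y).measurableEmbedding (f := (‖·‖ ^ s))).2 ?_
  exact (integrableOn_ball_norm_rpow hE hs (r + ‖y‖)).mono_set (ball_neg_subset_ball le_rfl)

lemma setIntegral_ball_norm_sub_rpow_le (hE : 1 ≤ Module.finrank ℝ E)
    (hs : -(Module.finrank ℝ E : ℝ) < s) {y : E} {r R : ℝ} (hy : ‖y‖ ≤ R) :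
    ∫ w in ball 0 r, ‖w - y‖ ^ s ∂μ ≤ ∫ u in ball 0 (r + R), ‖u‖ ^ s ∂μ :=
  calc ∫ w in ball 0 r, ‖w - y‖ ^ s ∂μ = ∫ u in ball (-y) r, ‖u‖ ^ s ∂μ := by
        rw [← preimage_sub_right_ball_neg y r]
        exact (measurePreserving_sub_right μ y).setIntegral_preimage_emb
          (Homeomorph.subRight y).measurableEmbedding (‖·‖ ^ s) _
    _ ≤ ∫ u in ball 0 (r + R), ‖u‖ ^ s ∂μ :=
        setIntegral_mono_set (integrableOn_ball_norm_rpow hE hs _)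
          (ae_of_all _ fun u ↦ rpow_nonneg (norm_nonneg u) s)
          (ball_neg_subset_ball hy).eventuallyLE

end NormRpow

lemma max_one_log_le_max_one_log {x y : ℝ} (hx : 0 ≤ x) (hxy : x ≤ y) :
    max 1 (log x) ≤ max 1 (log y) := by
  rcases hx.eq_or_lt with rfl | hx
  · simp
  · exact max_le_max le_rfl (log_le_log hx hxy)

lemma max_one_log_div_le {a δ ε : ℝ} (ha : 1 ≤ a) (hδ : 0 < δ) (hε : 0 < ε) :
    max 1 (log (a / δ)) ≤ (1 + log a + 1 / ε) * (δ ^ (-ε) + 1) := by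
  have hlog_a : 0 ≤ log a := log_nonneg ha
  have hpow : 0 ≤ δ ^ (-ε) := by positivity
  have hinv : 0 < 1 / ε := by positivity
  have hneg_log : -log δ ≤ δ ^ (-ε) / ε := by
    simpa [log_inv, inv_rpow hδ.le, rpow_neg hδ.le] using log_le_rpow_div (inv_nonneg.2 hδ.le) hε
  rw [div_eq_mul_one_div] at hneg_log
  rw [log_div (by linarith) hδ.ne']
  refine max_le ?_ ?_ <;> nlinarith [mul_nonneg (add_nonneg zero_le_one hlog_a) hpow]

section Integrand

variable {E : Type*} [NormedAddCommGroup E] {w y : E} (s β : ℝ)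

lemma integrand_nonneg (hw : ‖w‖ < 1) :
    0 ≤ ‖w - y‖ ^ s * min 1 ((1 - ‖w‖) ^ β / ‖y - w‖ ^ β) *
      max 1 (log (‖w - y‖ / (1 - ‖y‖))) := by
  have hw' : 0 ≤ 1 - ‖w‖ := by linarith
  have hmin : 0 ≤ min 1 ((1 - ‖w‖) ^ β / ‖y - w‖ ^ β) := le_min zero_le_one (by positivity)
  have hmax : 0 ≤ max 1 (log (‖w - y‖ / (1 - ‖y‖))) := le_max_of_le_left zero_le_one
  positivity

lemma integrand_le (hw : ‖w‖ < 1) (hy : ‖y‖ < 1) :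
    ‖w - y‖ ^ s * min 1 ((1 - ‖w‖) ^ β / ‖y - w‖ ^ β) * max 1 (log (‖w - y‖ / (1 - ‖y‖)))
      ≤ max 1 (log (2 / (1 - ‖y‖))) * ‖w - y‖ ^ s := by
  have hδ : 0 < 1 - ‖y‖ := by linarith
  have hwy : ‖w - y‖ ≤ 2 := by linarith [norm_sub_le w y]
  have hmin : min 1 ((1 - ‖w‖) ^ β / ‖y - w‖ ^ β) ≤ 1 := min_le_left _ _
  have hlog := max_one_log_le_max_one_log (by positivity) (div_le_div_of_nonneg_right hwy hδ.le)
  calc _ ≤ ‖w - y‖ ^ s * 1 * max 1 (log (2 / (1 - ‖y‖))) := by gcongr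
    _ = _ := by ring

end Integrand

theorem stmt_10_general (d : ℕ) (hd : 2 ≤ d) (β : ℝ) (hβ : 0 < β) :
    ∃ c : ℝ, 0 < c ∧ ∀ y : EuclideanSpace ℝ (Fin d), ‖y‖ < 1 →
      (∫ w in ball (0 : EuclideanSpace ℝ (Fin d)) 1,
          ‖w - y‖ ^ (β - d) * min 1 ((1 - ‖w‖) ^ β / ‖y - w‖ ^ β) *
            max 1 (Real.log (‖w - y‖ / (1 - ‖y‖))))
        ≤ c * ((1 - ‖y‖) ^ (-β/2) + 1) := by
  have hE : 1 ≤ Module.finrank ℝ (EuclideanSpace ℝ (Fin d)) := by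
    rw [finrank_euclideanSpace_fin]; omega
  have hs : -(Module.finrank ℝ (EuclideanSpace ℝ (Fin d)) : ℝ) < β - d := by
    rw [finrank_euclideanSpace_fin]; linarith
  set K := ∫ u in ball (0 : EuclideanSpace ℝ (Fin d)) 2, ‖u‖ ^ (β - d)
  have hK : 0 ≤ K := setIntegral_nonneg measurableSet_ball fun u _ ↦ rpow_nonneg (norm_nonneg u) _
  refine ⟨(1 + log 2 + 1 / (β / 2)) * (K + 1), by positivity, fun y hy ↦ ?_⟩
  set M := max 1 (log (2 / (1 - ‖y‖)))
  have hM : M ≤ (1 + log 2 + 1 / (β / 2)) * ((1 - ‖y‖) ^ (-β / 2) + 1) := by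
    simpa only [neg_div] using max_one_log_div_le one_le_two (sub_pos.2 hy) (half_pos hβ)
  calc _ ≤ ∫ w in ball (0 : EuclideanSpace ℝ (Fin d)) 1, M * ‖w - y‖ ^ (β - d) :=
        integral_mono_of_nonneg
          (ae_restrict_of_forall_mem measurableSet_ball fun w hw ↦
            integrand_nonneg _ _ (mem_ball_zero_iff.1 hw))
          ((integrableOn_ball_norm_sub_rpow hE hs y 1).const_mul M)
          (ae_restrict_of_forall_mem measurableSet_ball fun w hw ↦
            integrand_le _ _ (mem_ball_zero_iff.1 hw) hy)
    _ = M * ∫ w in ball (0 : EuclideanSpace ℝ (Fin d)) 1, ‖w - y‖ ^ (β - d) :=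
        integral_const_mul _ _
    _ ≤ M * K := by
        gcongr
        simpa [one_add_one_eq_two] using setIntegral_ball_norm_sub_rpow_le hE hs (r := 1) hy.le
    _ ≤ (1 + log 2 + 1 / (β / 2)) * ((1 - ‖y‖) ^ (-β / 2) + 1) * (K + 1) := by
        gcongr; linarith
    _ = _ := by ring

theorem stmt_10 (d : ℕ) (hd : 2 ≤ d) (β : ℝ) (hβ : 0 < β) (hβ1 : 2 * β < 2) :
    ∃ c : ℝ, 0 < c ∧ ∀ y : EuclideanSpace ℝ (Fin d), ‖y‖ < 1 →
      (∫ w in ball (0 : EuclideanSpace ℝ (Fin d)) 1,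
          ‖w - y‖ ^ (β - d) * min 1 ((1 - ‖w‖) ^ β / ‖y - w‖ ^ β) *
            max 1 (Real.log (‖w - y‖ / (1 - ‖y‖))))
        ≤ c * ((1 - ‖y‖) ^ (-β/2) + 1) :=
  stmt_10_general d hd β hβ
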